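/- arXiv:2410.02020 — 2 statements merged into one kernel-verified Lean document; each statement's English description precedes it below -/
import Mathlib

section
/- The potential energy V(Q) = (1/2)·∫_{-∞}^{∞} (Q'(x)² + k²·sin²(Q(x))) dx of the kink Q(x) = 2·arctan(e^{kx}) equals 2k. -/
/-!
The kink solves the first-order (Bogomolny) equation `Q' = k sin Q`. Along such a solution the
energy density `Q'² + k² sin² Q` equals `2 k sin Q · Q'`, the derivative of `-2k cos Q`, so the
energy is `2k (cos Q(-∞) - cos Q(+∞)) = 2k (cos 0 - cos π) = 4k`.
-/

open Real MeasureTheory Set Filter Topology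

theorem integrable_deriv_of_nonneg_of_tendsto {g g' : ℝ → ℝ} {m n : ℝ}
    (hderiv : ∀ x, HasDerivAt g (g' x) x) (hpos : ∀ x, 0 ≤ g' x)
    (hbot : Tendsto g atBot (𝓝 m)) (htop : Tendsto g atTop (𝓝 n)) : Integrable g' := by
  have hint : ∀ a b, IntervalIntegrable g' volume a b := fun a b =>
    intervalIntegral.intervalIntegrable_deriv_of_nonneg
      (fun x _ => (hderiv x).continuousAt.continuousWithinAt) (fun x _ => hderiv x)
      (fun x _ => hpos x)
  refine integrable_of_intervalIntegral_norm_tendsto (n - m) (fun i => (hint (-i) i).1)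
    tendsto_neg_atTop_atBot tendsto_id ?_
  have hftc : ∀ i : ℝ, g i - g (-i) = ∫ x in -i..i, ‖g' x‖ := fun i => by
    simp only [Real.norm_of_nonneg (hpos _)]
    exact (intervalIntegral.integral_eq_sub_of_hasDerivAt (fun x _ => hderiv x) (hint _ _)).symm
  exact (htop.sub (hbot.comp tendsto_neg_atTop_atBot)).congr hftc

theorem sin_two_mul_arctan (x : ℝ) : sin (2 * arctan x) = 2 * x / (1 + x ^ 2) := by
  have hsq : √(1 + x ^ 2) ^ 2 = 1 + x ^ 2 := sq_sqrt (by positivity)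
  have hpos : 0 < √(1 + x ^ 2) := by positivity
  rw [sin_two_mul, sin_arctan, cos_arctan]
  field_simp
  rw [hsq]

theorem hasDerivAt_two_mul_arctan_exp (k x : ℝ) :
    HasDerivAt (fun x => 2 * arctan (exp (k * x))) (k * sin (2 * arctan (exp (k * x)))) x := by
  have hexp : HasDerivAt (fun x => exp (k * x)) (exp (k * x) * k) x := by
    simpa only [mul_one] using ((hasDerivAt_id' x).const_mul k).exp
  refine (((hasDerivAt_arctan _).comp x hexp).const_mul 2).congr_deriv ?_
  rw [sin_two_mul_arctan]
  ring

theorem tendsto_two_mul_arctan_exp_atBot {k : ℝ} (hk : 0 < k) :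
    Tendsto (fun x => 2 * arctan (exp (k * x))) atBot (𝓝 0) := by
  have h := (continuous_arctan.tendsto 0).comp
    (tendsto_exp_atBot.comp (tendsto_id.const_mul_atBot hk))
  simpa only [arctan_zero, mul_zero, Function.comp_def, id] using h.const_mul 2

theorem tendsto_two_mul_arctan_exp_atTop {k : ℝ} (hk : 0 < k) :
    Tendsto (fun x => 2 * arctan (exp (k * x))) atTop (𝓝 π) := by
  have h := tendsto_nhds_of_tendsto_nhdsWithin tendsto_arctan_atTop |>.comp
    (tendsto_exp_atTop.comp (tendsto_id.const_mul_atTop hk))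
  simpa only [mul_div_cancel₀ π two_ne_zero, Function.comp_def, id] using h.const_mul 2

theorem integral_energy_of_hasDerivAt_eq_mul_sin {Q : ℝ → ℝ} {k a b : ℝ}
    (hQ : ∀ x, HasDerivAt Q (k * sin (Q x)) x)
    (ha : Tendsto Q atBot (𝓝 a)) (hb : Tendsto Q atTop (𝓝 b)) :
    ∫ x, (deriv Q x ^ 2 + k ^ 2 * sin (Q x) ^ 2) = 2 * k * (cos a - cos b) := by
  have hdensity : ∀ x, deriv Q x ^ 2 + k ^ 2 * sin (Q x) ^ 2 = 2 * (k * sin (Q x)) ^ 2 :=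
    fun x => by rw [(hQ x).deriv]; ring
  have hprimitive : ∀ x, HasDerivAt (fun x => -(2 * k) * cos (Q x)) (2 * (k * sin (Q x)) ^ 2) x :=
    fun x => ((hQ x).cos.const_mul (-(2 * k))).congr_deriv (by ring)
  have hbot := ((continuous_cos.tendsto a).comp ha).const_mul (-(2 * k))
  have htop := ((continuous_cos.tendsto b).comp hb).const_mul (-(2 * k))
  simp only [hdensity]
  rw [integral_of_hasDerivAt_of_tendsto hprimitive
    (integrable_deriv_of_nonneg_of_tendsto hprimitive (fun x => by positivity) hbot htop) hbot htop]
  ring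

/-- The potential energy of the kink `Q(x) = 2·arctan(e^{kx})` equals `2k`. -/
theorem kink_energy (k : ℝ) (hk : 0 < k) (Q : ℝ → ℝ)
    (hQ : ∀ x, Q x = 2 * Real.arctan (Real.exp (k * x))) :
    (1 / 2) * ∫ x : ℝ, ((deriv Q x) ^ 2 + k ^ 2 * (Real.sin (Q x)) ^ 2) = 2 * k := by
  obtain rfl : Q = fun x => 2 * arctan (exp (k * x)) := funext hQ
  rw [integral_energy_of_hasDerivAt_eq_mul_sin (hasDerivAt_two_mul_arctan_exp k)
    (tendsto_two_mul_arctan_exp_atBot hk) (tendsto_two_mul_arctan_exp_atTop hk), cos_zero, cos_pi]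
  ring
end

section
/- For any continuously differentiable function u : ℝ → ℝ with u(-∞) = 0 and u(+∞) = π and finite potential energy, one has V(u) = (1/2)·∫_ℝ (u'(x) − k·sin(u(x)))² dx + 2k; in particular V(u) ≥ 2k (Bogomolny inequality). -/
/-!
Expanding the square gives `(u' - k sin u)² = u'² + k² sin² u - 2k u' sin u`, and
`u' sin u` is the derivative of `-cos u`, whose limits `-1` at `-∞` and `1` at `+∞` make
its integral equal to `2`. The energy is therefore `2k` plus half the integral of a square.
-/

open Real MeasureTheory Filter

theorem integral_sub_mul_sq_eq {α : Type*} [MeasurableSpace α] {μ : Measure α} {f g : α → ℝ}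
    (k : ℝ) (hf : Integrable (fun x => f x ^ 2) μ) (hg : Integrable (fun x => g x ^ 2) μ)
    (hfg : Integrable (fun x => f x * g x) μ) :
    ∫ x, (f x - k * g x) ^ 2 ∂μ =
      ∫ x, (f x ^ 2 + k ^ 2 * g x ^ 2) ∂μ - 2 * k * ∫ x, f x * g x ∂μ := by
  calc ∫ x, (f x - k * g x) ^ 2 ∂μ
      = ∫ x, (f x ^ 2 + k ^ 2 * g x ^ 2 - 2 * k * (f x * g x)) ∂μ := by
        congr 1 with x; ring
    _ = ∫ x, (f x ^ 2 + k ^ 2 * g x ^ 2) ∂μ - 2 * k * ∫ x, f x * g x ∂μ := by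
        have hsum : Integrable (fun x => f x ^ 2 + k ^ 2 * g x ^ 2) μ := hf.add (hg.const_mul _)
        rw [integral_sub hsum (hfg.const_mul _), integral_const_mul]

theorem Integrable.mul_of_integrable_sq {α : Type*} [MeasurableSpace α] {μ : Measure α}
    {f g : α → ℝ} (hfm : AEStronglyMeasurable f μ) (hgm : AEStronglyMeasurable g μ)
    (hf : Integrable (fun x => f x ^ 2) μ) (hg : Integrable (fun x => g x ^ 2) μ) :
    Integrable (fun x => f x * g x) μ :=
  ((memLp_two_iff_integrable_sq hfm).2 hf).integrable_mul ((memLp_two_iff_integrable_sq hgm).2 hg)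

theorem integral_deriv_mul_comp_of_tendsto {u G g : ℝ → ℝ} {a b : ℝ}
    (hu : Differentiable ℝ u) (hG : ∀ y, HasDerivAt G (g y) y)
    (hint : Integrable (fun x => deriv u x * g (u x)))
    (hbot : Tendsto u atBot (nhds a)) (htop : Tendsto u atTop (nhds b)) :
    ∫ x, deriv u x * g (u x) = G b - G a := by
  have hGc : Continuous G := continuous_iff_continuousAt.2 fun y => (hG y).continuousAt
  refine integral_of_hasDerivAt_of_tendsto (f := G ∘ u) (fun x => ?_) hint
    ((hGc.tendsto a).comp hbot) ((hGc.tendsto b).comp htop)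
  rw [mul_comm]
  exact (hG (u x)).comp x (hu x).hasDerivAt

theorem integral_deriv_mul_sin_comp_eq_two {u : ℝ → ℝ} (hu : Differentiable ℝ u)
    (hint : Integrable (fun x => deriv u x * sin (u x)))
    (hbot : Tendsto u atBot (nhds 0)) (htop : Tendsto u atTop (nhds π)) :
    ∫ x, deriv u x * sin (u x) = 2 := by
  rw [integral_deriv_mul_comp_of_tendsto (G := fun y => -cos y) hu
    (fun y => by simpa using (hasDerivAt_cos y).fun_neg) hint hbot htop]
  norm_num

theorem bogomolny_inequality_general (k : ℝ) (u : ℝ → ℝ)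
    (hu : ContDiff ℝ 1 u)
    (hbot : Tendsto u atBot (nhds 0))
    (htop : Tendsto u atTop (nhds Real.pi))
    (hI1 : Integrable (fun x => (deriv u x) ^ 2))
    (hI2 : Integrable (fun x => (Real.sin (u x)) ^ 2)) :
    (1 / 2) * (∫ x : ℝ, ((deriv u x) ^ 2 + k ^ 2 * (Real.sin (u x)) ^ 2)) =
      (1 / 2) * (∫ x : ℝ, (deriv u x - k * Real.sin (u x)) ^ 2) + 2 * k ∧
    2 * k ≤ (1 / 2) * (∫ x : ℝ, ((deriv u x) ^ 2 + k ^ 2 * (Real.sin (u x)) ^ 2)) := by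
  have hprod : Integrable (fun x => deriv u x * sin (u x)) :=
    Integrable.mul_of_integrable_sq (hu.continuous_deriv le_rfl).aestronglyMeasurable
      (continuous_sin.comp hu.continuous).aestronglyMeasurable hI1 hI2
  have hsq := integral_sub_mul_sq_eq k hI1 hI2 hprod
  rw [integral_deriv_mul_sin_comp_eq_two (hu.differentiable one_ne_zero) hprod hbot htop] at hsq
  have hnonneg : 0 ≤ ∫ x, (deriv u x - k * sin (u x)) ^ 2 := integral_nonneg fun x => sq_nonneg _
  constructor <;> linarith

/-- Bogomolny inequality: for a C¹ map `u` of degree one (limits `0` at `−∞`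
and `π` at `+∞`) with finite potential energy,
`V(u) = (1/2)∫ (u' − k·sin u)² + 2k`, hence `V(u) ≥ 2k`. -/
theorem bogomolny_inequality (k : ℝ) (hk : 0 < k) (u : ℝ → ℝ)
    (hu : ContDiff ℝ 1 u)
    (hbot : Tendsto u atBot (nhds 0))
    (htop : Tendsto u atTop (nhds Real.pi))
    (hI1 : Integrable (fun x => (deriv u x) ^ 2))
    (hI2 : Integrable (fun x => (Real.sin (u x)) ^ 2)) :
    (1 / 2) * (∫ x : ℝ, ((deriv u x) ^ 2 + k ^ 2 * (Real.sin (u x)) ^ 2)) =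
      (1 / 2) * (∫ x : ℝ, (deriv u x - k * Real.sin (u x)) ^ 2) + 2 * k ∧
    2 * k ≤ (1 / 2) * (∫ x : ℝ, ((deriv u x) ^ 2 + k ^ 2 * (Real.sin (u x)) ^ 2)) :=
  bogomolny_inequality_general k u hu hbot htop hI1 hI2
end
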